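/- arXiv:1006.2696 — 3 statements merged into one kernel-verified Lean document; each statement's English description precedes it below -/
import Mathlib

section
/- (Jovovic's conjecture.) Let m_n be the number of matrices in M_n^(1), i.e., upper triangular binary (0/1) matrices in which every row and every column contains a nonzero entry and whose entries sum to n (with m_0 = 1 for the empty matrix). Then in ℚ⟦x⟧, Σ_{n≥0} m_n x^n = Σ_{n≥0} ∏_{i=1}^{n} (1 − (1+x)^{−i}). -/
/-- Number of ascents in an integer sequence. -/
def ascList (l : List ℕ) : ℕ :=
  (List.range (l.length - 1)).countP (fun j => decide (l.getD j 0 < l.getD (j + 1) 0))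

/-- Ascent sequence predicate. -/
def IsAscentSeq (l : List ℕ) : Prop :=
  l.getD 0 0 = 0 ∧ ∀ i, 0 < i → i < l.length → l.getD i 0 ≤ 1 + ascList (l.take i)

/-- Number of equal adjacent pairs. -/
def adjpairs (l : List ℕ) : ℕ :=
  (List.range (l.length - 1)).countP (fun j => decide (l.getD j 0 = l.getD (j + 1) 0))

/-- All runs of equal consecutive letters have length at most `k`
(no `k+1` consecutive equal entries). -/
def RunsAtMost (k : ℕ) (l : List ℕ) : Prop :=
  ¬ ∃ i, i + k < l.length ∧ ∀ j ≤ k, l.getD (i + j) 0 = l.getD i 0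

/-- Order-isomorphism of two partial orders on `Fin n`. -/
def PosetIso {n : ℕ} (P Q : PartialOrder (Fin n)) : Prop :=
  ∃ e : Fin n ≃ Fin n, ∀ a b, P.le a b ↔ Q.le (e a) (e b)

/-- The setoid of partial orders on `Fin n` satisfying `Φ`, up to isomorphism. -/
def posetSetoid (n : ℕ) (Φ : PartialOrder (Fin n) → Prop) :
    Setoid {P : PartialOrder (Fin n) // Φ P} where
  r P Q := PosetIso P.1 Q.1
  iseqv := by
    constructor
    · intro P
      exact ⟨Equiv.refl _, fun a b => Iff.rfl⟩
    · rintro P Q ⟨e, he⟩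
      refine ⟨e.symm, fun a b => ?_⟩
      simp only [he (e.symm a) (e.symm b), Equiv.apply_symm_apply]
    · rintro P Q R ⟨e, he⟩ ⟨f, hf⟩
      exact ⟨e.trans f, fun a b => (he a b).trans (hf (e a) (e b))⟩

/-- The number of isomorphism classes of partial orders on `n` elements satisfying `Φ`. -/
noncomputable def posetCount (n : ℕ) (Φ : PartialOrder (Fin n) → Prop) : ℕ :=
  Nat.card (Quotient (posetSetoid n Φ))

/-- A poset is (2+2)-free. -/
def TwoTwoFree {n : ℕ} (P : PartialOrder (Fin n)) : Prop :=
  ¬ ∃ a b c d : Fin n, P.lt a b ∧ P.lt c d ∧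
    ¬ P.le a c ∧ ¬ P.le c a ∧ ¬ P.le a d ∧ ¬ P.le d a ∧
    ¬ P.le b c ∧ ¬ P.le c b ∧ ¬ P.le b d ∧ ¬ P.le d b

/-- Two elements are indistinguishable: same strict down-set and same strict up-set. -/
def Indist {n : ℕ} (P : PartialOrder (Fin n)) (x y : Fin n) : Prop :=
  (∀ z, P.lt z x ↔ P.lt z y) ∧ (∀ z, P.lt x z ↔ P.lt y z)

/-- Indistinguishability as a setoid. -/
def indistSetoid {n : ℕ} (P : PartialOrder (Fin n)) : Setoid (Fin n) where
  r := Indist P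
  iseqv := ⟨fun _ => ⟨fun _ => Iff.rfl, fun _ => Iff.rfl⟩,
    fun h => ⟨fun z => (h.1 z).symm, fun z => (h.2 z).symm⟩,
    fun h h' => ⟨fun z => (h.1 z).trans (h'.1 z), fun z => (h.2 z).trans (h'.2 z)⟩⟩

/-- Size of the indistinguishability class of `x`. -/
noncomputable def classSize {n : ℕ} (P : PartialOrder (Fin n)) (x : Fin n) : ℕ :=
  Nat.card {y : Fin n // Indist P x y}

/-- `maxindist(P) ≤ k`: each indistinguishability class has size at most `k`. -/
def MaxindistLe {n : ℕ} (P : PartialOrder (Fin n)) (k : ℕ) : Prop :=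
  ∀ x : Fin n, classSize P x ≤ k

/-- No two distinct elements are indistinguishable. -/
def PrimitivePoset {n : ℕ} (P : PartialOrder (Fin n)) : Prop :=
  ∀ x y : Fin n, Indist P x y → x = y

/-- `rep(P)`: the minimum number of elements whose removal leaves an induced
subposet with no pair of distinct indistinguishable elements. -/
noncomputable def repStat {n : ℕ} (P : PartialOrder (Fin n)) : ℕ :=
  sInf {m | ∃ S : Finset (Fin n), S.card = m ∧
    ∀ x ∉ S, ∀ y ∉ S, Indist P x y → x = y}

/-- The strict down-set of `x`. -/
def downSet {n : ℕ} (P : PartialOrder (Fin n)) (x : Fin n) : Set (Fin n) :=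
  {z | P.lt z x}

/-- The level of `x`: the number of strict down-sets strictly contained in `D(x)`. -/
noncomputable def levelOf {n : ℕ} (P : PartialOrder (Fin n)) (x : Fin n) : ℕ :=
  {S : Set (Fin n) | (∃ z, S = downSet P z) ∧ S ⊂ downSet P x}.ncard

/-- `levels(P)`: index of the highest level. -/
noncomputable def levelsStat {n : ℕ} (P : PartialOrder (Fin n)) : ℕ :=
  {S : Set (Fin n) | ∃ z, S = downSet P z}.ncard - 1

/-- `x` is a maximal element. -/
def IsMaximal {n : ℕ} (P : PartialOrder (Fin n)) (x : Fin n) : Prop :=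
  ∀ z, ¬ P.lt x z

/-- `minmax(P)`: the minimum level of a maximal element. -/
noncomputable def minmaxStat {n : ℕ} (P : PartialOrder (Fin n)) : ℕ :=
  sInf {j | ∃ x, IsMaximal P x ∧ levelOf P x = j}

/-- Membership in `M_n`: upper triangular, no zero row or column, entries sum to `n`. -/
def InMatM (n : ℕ) (A : Σ d : ℕ, Matrix (Fin d) (Fin d) ℕ) : Prop :=
  (∀ i j : Fin A.1, (j : ℕ) < (i : ℕ) → A.2 i j = 0) ∧
  (∀ i : Fin A.1, ∃ j, A.2 i j ≠ 0) ∧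
  (∀ j : Fin A.1, ∃ i, A.2 i j ≠ 0) ∧
  (∑ i, ∑ j, A.2 i j) = n

/-- All entries are at most `k`. -/
def EntriesLe (k : ℕ) (A : Σ d : ℕ, Matrix (Fin d) (Fin d) ℕ) : Prop :=
  ∀ i j, A.2 i j ≤ k

/-- `index(A) - 1`: the least (0-based) row index with a nonzero entry in the last column. -/
noncomputable def matIndex0 (A : Σ d : ℕ, Matrix (Fin d) (Fin d) ℕ) : ℕ :=
  sInf {i : ℕ | ∃ (h : i < A.1) (h' : A.1 - 1 < A.1), A.2 ⟨i, h⟩ ⟨A.1 - 1, h'⟩ ≠ 0}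

/-- The number of nonzero entries of `A`. -/
noncomputable def matNZ (A : Σ d : ℕ, Matrix (Fin d) (Fin d) ℕ) : ℕ :=
  Nat.card {p : Fin A.1 × Fin A.1 // A.2 p.1 p.2 ≠ 0}

/-- Membership in `R_n`. -/
def InRset {n : ℕ} (π : Equiv.Perm (Fin n)) : Prop :=
  ¬ ∃ i j k : Fin n, (j : ℕ) = (i : ℕ) + 1 ∧ (i : ℕ) + 1 < (k : ℕ) ∧
    (π k : ℕ) < (π i : ℕ) ∧ (π i : ℕ) < (π j : ℕ) ∧ (π i : ℕ) = (π k : ℕ) + 1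

/-- No `k+1` consecutive letters, each one less than the previous. -/
def NoDescRun {n : ℕ} (k : ℕ) (π : Equiv.Perm (Fin n)) : Prop :=
  ¬ ∃ (i : ℕ) (h : i + k < n), ∀ j, ∀ hj : j ≤ k,
    (π ⟨i + j, by omega⟩ : ℕ) = (π ⟨i, by omega⟩ : ℕ) - j

/-- The number of descents by one: indices `i` with `π_i = π_{i+1} + 1`. -/
noncomputable def adjdes {n : ℕ} (π : Equiv.Perm (Fin n)) : ℕ :=
  Nat.card {i : ℕ // ∃ h : i + 1 < n,
    (π ⟨i, Nat.lt_of_succ_lt h⟩ : ℕ) = (π ⟨i + 1, h⟩ : ℕ) + 1}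

/-- A perfect matching, encoded as a fixed-point-free involution. -/
def IsMatching {m : ℕ} (f : Equiv.Perm (Fin m)) : Prop :=
  (∀ x, f (f x) = x) ∧ ∀ x, f x ≠ x

/-- The Stoimenow condition on a matching. -/
def IsStoimenow {m : ℕ} (f : Equiv.Perm (Fin m)) : Prop :=
  ¬ ∃ a c : Fin m, a < f a ∧ c < f c ∧
    (((a : ℕ) = (c : ℕ) + 1 ∧ f a < f c) ∨ ((a : ℕ) < (c : ℕ) ∧ (f a : ℕ) = (f c : ℕ) + 1))

/-- There are `i, j` such that `{i+l, j+l}` is an arc for every `l = 0, …, k`. -/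
def HasSimRun {m : ℕ} (k : ℕ) (f : Equiv.Perm (Fin m)) : Prop :=
  ∃ i j : ℕ, ∀ l ≤ k, ∃ (h1 : i + l < m) (h2 : j + l < m), f ⟨i + l, h1⟩ = ⟨j + l, h2⟩

/-- After removing the arcs with endpoints in `A`, no pair of similar arcs remains. -/
def SimilarFree {m : ℕ} (f : Equiv.Perm (Fin m)) (A : Finset (Fin m)) : Prop :=
  ¬ ∃ (i j : ℕ) (h1 : i < m) (h2 : j < m) (h3 : i + 1 < m) (h4 : j + 1 < m),
    f ⟨i, h1⟩ = ⟨j, h2⟩ ∧ f ⟨i + 1, h3⟩ = ⟨j + 1, h4⟩ ∧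
    (⟨i, h1⟩ : Fin m) ∉ A ∧ (⟨i + 1, h3⟩ : Fin m) ∉ A ∧
    (⟨j, h2⟩ : Fin m) ∉ A ∧ (⟨j + 1, h4⟩ : Fin m) ∉ A

/-- `echords(M)`: minimum number of arcs whose removal leaves no similar pair. -/
noncomputable def echords {m : ℕ} (f : Equiv.Perm (Fin m)) : ℕ :=
  sInf {c | ∃ A : Finset (Fin m), (∀ x ∈ A, f x ∈ A) ∧ A.card = 2 * c ∧ SimilarFree f A}

/-! A 0/1 upper triangular `k × k` matrix with no zero row or column is a family of nonempty
column supports `g j ⊆ {0, …, j}` covering every row. Sieving over the set `T` of rows forced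
to be empty, column `j` contributes `(1 + x) ^ c_j - 1`, where `c_j` counts the rows `≤ j`
outside `T`. Grouping the sieve by the number `n` of kept rows gives series `F k n`, divisible
by `x ^ k`, with `F (k + 1) (n + 1) = ((1 + x) ^ (n + 1) - 1) (F k n - F k (n + 1))`. Summed
over `k` this says `P (n + 1) = (1 - (1 + x) ^ (-(n + 1))) P n` for `P n = ∑ k, F k n`, so
`P n = ∏ i ∈ [1, n], (1 - (1 + x) ^ (-i))`, and summing over `n` gives the generating function.
Truncating all sums at `k, n ≤ d` is exact modulo `x ^ (d + 1)`. -/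

namespace Jovovic

open Finset PowerSeries

variable {R : Type*} [CommRing R]

def keptRows (T : Finset ℕ) (j : ℕ) : ℕ := #(range (j + 1) \ T)

lemma keptRows_of_subset {T : Finset ℕ} {j : ℕ} (hT : T ⊆ range (j + 1)) :
    keptRows T j = j + 1 - #T := by
  rw [keptRows, card_sdiff_of_subset hT, card_range]

lemma keptRows_insert_of_lt (T : Finset ℕ) {j k : ℕ} (hjk : j < k) :
    keptRows (insert k T) j = keptRows T j := by
  rw [keptRows, keptRows, sdiff_insert_of_notMem (by simpa using hjk.not_ge)]

/-- `g j` is the support of column `j`; the rows in `T` are forbidden. -/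
def colFamilies (k : ℕ) (T : Finset ℕ) : Finset (Fin k → Finset ℕ) :=
  Fintype.piFinset fun j => (range (j + 1) \ T).powerset.erase ∅

lemma mem_colFamilies {k : ℕ} {T : Finset ℕ} {g : Fin k → Finset ℕ} :
    g ∈ colFamilies k T ↔ ∀ j, g j ≠ ∅ ∧ g j ⊆ range (j + 1) \ T := by
  simp [colFamilies]

def uncoveredRows {k : ℕ} (g : Fin k → Finset ℕ) : Finset ℕ :=
  {i ∈ range k | ∀ j, i ∉ g j}

def weight {k : ℕ} (g : Fin k → Finset ℕ) : ℕ := ∑ j, #(g j)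

def coveringFamilies (k : ℕ) : Finset (Fin k → Finset ℕ) :=
  {g ∈ colFamilies k ∅ | uncoveredRows g = ∅}

lemma sum_colFamilies_X_pow_weight (k : ℕ) (T : Finset ℕ) :
    ∑ g ∈ colFamilies k T, (X : R⟦X⟧) ^ weight g =
      ∏ j ∈ range k, ((1 + X) ^ keptRows T j - 1) := by
  have hcol (S : Finset ℕ) : ∑ U ∈ S.powerset.erase ∅, (X : R⟦X⟧) ^ #U = (1 + X) ^ #S - 1 := by
    have hall := sum_pow_mul_eq_add_pow (X : R⟦X⟧) 1 S
    rw [← sum_erase_add _ _ (empty_mem_powerset S)] at hall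
    simp only [one_pow, mul_one, card_empty, pow_zero] at hall
    linear_combination hall
  simp only [weight, ← prod_pow_eq_pow_sum, colFamilies]
  rw [← prod_univ_sum (fun j : Fin k => (range (j + 1) \ T).powerset.erase ∅)
    (fun _ U => (X : R⟦X⟧) ^ #U)]
  simp only [hcol]
  exact Fin.prod_univ_eq_prod_range (fun j => (1 + X) ^ keptRows T j - 1) k

lemma colFamilies_eq_filter {k : ℕ} {T : Finset ℕ} (hT : T ⊆ range k) :
    colFamilies k T = {g ∈ colFamilies k ∅ | T ⊆ uncoveredRows g} := by
  ext g
  simp only [Finset.mem_filter, mem_colFamilies, sdiff_empty, uncoveredRows, subset_iff,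
    mem_sdiff]
  grind

lemma sum_coveringFamilies_X_pow_weight (k : ℕ) :
    ∑ g ∈ coveringFamilies k, (X : R⟦X⟧) ^ weight g =
      ∑ T ∈ (range k).powerset, (-1) ^ #T * ∏ j ∈ range k, ((1 + X) ^ keptRows T j - 1) := by
  have halt (U : Finset ℕ) : ∑ T ∈ U.powerset, (-1 : R⟦X⟧) ^ #T = if U = ∅ then 1 else 0 := by
    have h := congrArg (Int.cast : ℤ → R⟦X⟧) (sum_powerset_neg_one_pow_card (x := U))
    push_cast at h
    exact h
  symm
  calc ∑ T ∈ (range k).powerset, (-1) ^ #T * ∏ j ∈ range k, ((1 + X) ^ keptRows T j - 1)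
      = ∑ T ∈ (range k).powerset, ∑ g ∈ colFamilies k ∅ with T ⊆ uncoveredRows g,
          (-1) ^ #T * (X : R⟦X⟧) ^ weight g := by
        refine sum_congr rfl fun T hT => ?_
        rw [← sum_colFamilies_X_pow_weight, colFamilies_eq_filter (mem_powerset.1 hT), mul_sum]
    _ = ∑ g ∈ colFamilies k ∅, ∑ T ∈ (uncoveredRows g).powerset,
          (-1) ^ #T * (X : R⟦X⟧) ^ weight g := by
        refine sum_comm' fun T g => ?_
        simp only [Finset.mem_filter, mem_powerset]
        exact ⟨fun h => ⟨h.2.2, h.2.1⟩,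
          fun h => ⟨h.1.trans (filter_subset _ _), h.2, h.1⟩⟩
    _ = ∑ g ∈ coveringFamilies k, (X : R⟦X⟧) ^ weight g := by
        rw [coveringFamilies, sum_filter]
        refine sum_congr rfl fun g _ => ?_
        rw [← sum_mul, halt]
        split_ifs <;> simp

lemma coeff_sum_coveringFamilies (k d : ℕ) :
    coeff d (∑ g ∈ coveringFamilies k, (X : R⟦X⟧) ^ weight g) =
      #{g ∈ coveringFamilies k | weight g = d} := by
  simp [coeff_X_pow, sum_boole, eq_comm]

variable (R) in
/-- The terms of the sieve `sum_coveringFamilies_X_pow_weight` that keep exactly `n` rows. -/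
noncomputable def sieveTerm (k n : ℕ) : R⟦X⟧ :=
  ∑ T ∈ (range k).powerset with #T + n = k,
    (-1) ^ #T * ∏ j ∈ range k, ((1 + X) ^ keptRows T j - 1)

lemma sum_sieveTerm_eq_sum_coveringFamilies {k d : ℕ} (hk : k ≤ d) :
    ∑ n ∈ range (d + 1), sieveTerm R k n = ∑ g ∈ coveringFamilies k, (X : R⟦X⟧) ^ weight g := by
  simp only [sieveTerm, sum_coveringFamilies_X_pow_weight]
  refine (sum_comm' (t' := (range k).powerset) (s' := fun T => {k - #T}) fun n T => ?_).trans
    (sum_congr rfl fun T _ => sum_singleton _ _)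
  have hcard : T ∈ (range k).powerset → #T ≤ k := fun hT => by
    simpa using card_le_card (mem_powerset.1 hT)
  simp only [Finset.mem_filter, mem_range, mem_singleton]
  constructor
  · rintro ⟨-, hT, h⟩
    exact ⟨by omega, hT⟩
  · rintro ⟨rfl, hT⟩
    have := hcard hT
    exact ⟨by omega, hT, by omega⟩

lemma X_dvd_one_add_X_pow_sub_one (i : ℕ) : (X : R⟦X⟧) ∣ (1 + X) ^ i - 1 := by
  have h := sub_one_dvd_pow_sub_one (1 + X : R⟦X⟧) i
  rwa [add_sub_cancel_left] at h

lemma isUnit_one_add_X_pow (i : ℕ) : IsUnit ((1 + X : R⟦X⟧) ^ i) :=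
  (isUnit_iff_constantCoeff.2 (by simp)).pow i

lemma X_pow_dvd_sieveTerm (k n : ℕ) : (X : R⟦X⟧) ^ k ∣ sieveTerm R k n := by
  refine dvd_sum fun T _ => Dvd.dvd.mul_left ?_ _
  simpa using prod_dvd_prod_of_dvd (s := range k) _ _ fun j _ =>
    X_dvd_one_add_X_pow_sub_one (R := R) (keptRows T j)

lemma sieveTerm_zero_zero : sieveTerm R 0 0 = 1 := by
  simp [sieveTerm, filter_singleton]

lemma sieveTerm_zero_succ (n : ℕ) : sieveTerm R 0 (n + 1) = 0 := by
  simp [sieveTerm]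

lemma sieveTerm_succ_zero (k : ℕ) : sieveTerm R (k + 1) 0 = 0 := by
  refine sum_eq_zero fun T hT => ?_
  obtain ⟨hsub, hcard⟩ := Finset.mem_filter.1 hT
  obtain rfl : T = range (k + 1) :=
    eq_of_subset_of_card_le (mem_powerset.1 hsub) (by simp [← hcard])
  refine mul_eq_zero_of_right _ (prod_eq_zero (mem_range.2 k.succ_pos) ?_)
  rw [keptRows, sdiff_eq_empty_iff_subset.2 (range_subset_range.2 (by omega))]
  simp

/-- Whether or not row `k` is removed, column `k` sees exactly `n + 1` kept rows. -/
lemma sieveTerm_succ_succ (k n : ℕ) :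
    sieveTerm R (k + 1) (n + 1) =
      ((1 + X) ^ (n + 1) - 1) * (sieveTerm R k n - sieveTerm R k (n + 1)) := by
  have hk : k ∉ range k := notMem_range_self
  simp only [sieveTerm, sum_filter, mul_sub, mul_sum]
  rw [range_add_one, sum_powerset_insert hk, sub_eq_add_neg, ← sum_neg_distrib]
  congr 1 <;> refine sum_congr rfl fun T hT => ?_
  all_goals
    have hTk : T ⊆ range k := mem_powerset.1 hT
    have hkT : k ∉ T := fun h => hk (hTk h)
    rw [prod_insert hk]
  · rw [keptRows_of_subset (hTk.trans (range_subset_range.2 k.le_succ))]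
    split_ifs <;> try omega
    · rw [show k + 1 - #T = n + 1 by omega]
      ring
    · simp
  · rw [card_insert_of_notMem hkT, keptRows_of_subset (insert_subset (self_mem_range_succ k)
      (hTk.trans (range_subset_range.2 k.le_succ))), card_insert_of_notMem hkT,
      prod_congr rfl fun j hj => by rw [keptRows_insert_of_lt T (mem_range.1 hj)]]
    split_ifs <;> try omega
    · rw [show k + 1 - (#T + 1) = n + 1 by omega]
      ring
    · simp

lemma one_add_X_pow_mul_sum_sieveTerm_succ (d n : ℕ) :
    (1 + X) ^ (n + 1) * ∑ k ∈ range (d + 1), sieveTerm R k (n + 1) =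
      ((1 + X) ^ (n + 1) - 1) *
        (∑ k ∈ range (d + 1), sieveTerm R k n + (sieveTerm R d (n + 1) - sieveTerm R d n)) := by
  have hrec : ∑ k ∈ range (d + 1), sieveTerm R k (n + 1) = ((1 + X) ^ (n + 1) - 1) *
      (∑ k ∈ range d, sieveTerm R k n - ∑ k ∈ range d, sieveTerm R k (n + 1)) := by
    rw [sum_range_succ', sieveTerm_zero_succ, add_zero, ← sum_sub_distrib, mul_sum]
    exact sum_congr rfl fun k _ => sieveTerm_succ_succ k n
  linear_combination hrec
    + ((1 + X) ^ (n + 1) - 1) * (sum_range_succ (sieveTerm R · (n + 1)) d)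
    - ((1 + X) ^ (n + 1) - 1) * (sum_range_succ (sieveTerm R · n) d)

section Field

variable {K : Type*} [Field K]

lemma one_add_X_pow_mul_one_sub_inv_pow (i : ℕ) :
    (1 + X : K⟦X⟧) ^ i * (1 - (1 + X)⁻¹ ^ i) = (1 + X) ^ i - 1 := by
  have h : (1 + X : K⟦X⟧) * (1 + X)⁻¹ = 1 := PowerSeries.mul_inv_cancel _ (by simp)
  rw [mul_sub, ← mul_pow, h, one_pow, mul_one]

lemma X_dvd_one_sub_inv_pow (i : ℕ) : (X : K⟦X⟧) ∣ 1 - (1 + X)⁻¹ ^ i := by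
  rw [← (isUnit_one_add_X_pow i).dvd_mul_left, one_add_X_pow_mul_one_sub_inv_pow]
  exact X_dvd_one_add_X_pow_sub_one i

lemma X_pow_dvd_prod_one_sub_inv_pow (n : ℕ) :
    (X : K⟦X⟧) ^ n ∣ ∏ i ∈ Icc 1 n, (1 - (1 + X)⁻¹ ^ i) := by
  simpa using prod_dvd_prod_of_dvd (s := Icc 1 n) _ _ fun i _ => X_dvd_one_sub_inv_pow (K := K) i

lemma X_pow_dvd_sum_sieveTerm_sub_prod (d n : ℕ) :
    (X : K⟦X⟧) ^ (d + 1) ∣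
      ∑ k ∈ range (d + 1), sieveTerm K k n - ∏ i ∈ Icc 1 n, (1 - (1 + X)⁻¹ ^ i) := by
  induction n with
  | zero => simp [sum_range_succ', sieveTerm_succ_zero, sieveTerm_zero_zero]
  | succ n ih =>
    have hstep : (1 + X) ^ (n + 1) * (∑ k ∈ range (d + 1), sieveTerm K k (n + 1) -
        ∏ i ∈ Icc 1 (n + 1), (1 - (1 + X)⁻¹ ^ i)) =
        ((1 + X) ^ (n + 1) - 1) * (∑ k ∈ range (d + 1), sieveTerm K k n -
          ∏ i ∈ Icc 1 n, (1 - (1 + X)⁻¹ ^ i)) +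
        ((1 + X) ^ (n + 1) - 1) * (sieveTerm K d (n + 1) - sieveTerm K d n) := by
      rw [prod_Icc_succ_top (by omega)]
      linear_combination one_add_X_pow_mul_sum_sieveTerm_succ (R := K) d n -
        (∏ i ∈ Icc 1 n, (1 - (1 + X : K⟦X⟧)⁻¹ ^ i)) *
          one_add_X_pow_mul_one_sub_inv_pow (K := K) (n + 1)
    rw [← (isUnit_one_add_X_pow (n + 1)).dvd_mul_left, hstep]
    refine dvd_add (dvd_mul_of_dvd_right ih _) ?_
    rw [pow_succ']
    exact mul_dvd_mul (X_dvd_one_add_X_pow_sub_one _)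
      (dvd_sub (X_pow_dvd_sieveTerm d _) (X_pow_dvd_sieveTerm d _))

lemma X_pow_dvd_sum_prod_sub_sum_coveringFamilies {d N : ℕ} (hdN : d < N) :
    (X : K⟦X⟧) ^ (d + 1) ∣ ∑ n ∈ range N, ∏ i ∈ Icc 1 n, (1 - (1 + X)⁻¹ ^ i) -
      ∑ k ∈ range (d + 1), ∑ g ∈ coveringFamilies k, X ^ weight g := by
  rw [sum_congr rfl fun k hk =>
      (sum_sieveTerm_eq_sum_coveringFamilies (mem_range_succ_iff.1 hk)).symm, Finset.sum_comm,
    ← sum_range_add_sum_Ico _ hdN, add_sub_right_comm, ← sum_sub_distrib]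
  refine dvd_add (dvd_sum fun n _ => dvd_sub_comm.1 (X_pow_dvd_sum_sieveTerm_sub_prod d n))
    (dvd_sum fun n hn => (pow_dvd_pow _ (mem_Ico.1 hn).1).trans (X_pow_dvd_prod_one_sub_inv_pow n))

end Field

section MatrixEncoding

variable {k : ℕ}

def colSupport (M : Matrix (Fin k) (Fin k) ℕ) (j : Fin k) : Finset ℕ :=
  ({i | M i j ≠ 0} : Finset (Fin k)).map Fin.valEmbedding

def ofColSupport (g : Fin k → Finset ℕ) : Matrix (Fin k) (Fin k) ℕ :=
  Matrix.of fun i j => if (i : ℕ) ∈ g j then 1 else 0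

lemma val_mem_colSupport {M : Matrix (Fin k) (Fin k) ℕ} {i j : Fin k} :
    (i : ℕ) ∈ colSupport M j ↔ M i j ≠ 0 := by
  simp [colSupport, Fin.val_inj]

lemma colSupport_subset_range (M : Matrix (Fin k) (Fin k) ℕ) (j : Fin k) :
    colSupport M j ⊆ range k := by
  simp [colSupport, subset_iff]

lemma colSupport_subset_range_succ_iff {M : Matrix (Fin k) (Fin k) ℕ} {j : Fin k} :
    colSupport M j ⊆ range (j + 1) ↔ ∀ i : Fin k, (j : ℕ) < i → M i j = 0 := by
  simp only [colSupport, subset_iff, forall_mem_map, Finset.mem_filter, mem_univ, true_and,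
    Fin.valEmbedding_apply, mem_range]
  exact forall_congr' fun i => by omega

lemma colSupport_ne_empty_iff {M : Matrix (Fin k) (Fin k) ℕ} {j : Fin k} :
    colSupport M j ≠ ∅ ↔ ∃ i, M i j ≠ 0 := by
  simp [colSupport]

lemma uncoveredRows_colSupport_eq_empty_iff {M : Matrix (Fin k) (Fin k) ℕ} :
    uncoveredRows (colSupport M) = ∅ ↔ ∀ i, ∃ j, M i j ≠ 0 := by
  simp only [uncoveredRows, filter_eq_empty_iff, mem_range, not_forall, not_not]
  refine ⟨fun h i => ?_, fun h i hi => ?_⟩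
  · simpa [val_mem_colSupport] using h i.isLt
  · obtain ⟨j, hj⟩ := h ⟨i, hi⟩
    exact ⟨j, val_mem_colSupport.2 hj⟩

lemma weight_colSupport {M : Matrix (Fin k) (Fin k) ℕ} (hM : ∀ i j, M i j ≤ 1) :
    weight (colSupport M) = ∑ i, ∑ j, M i j := by
  rw [weight, Finset.sum_comm (f := fun i j => M i j)]
  refine sum_congr rfl fun j _ => ?_
  rw [colSupport, card_map, card_filter]
  exact sum_congr rfl fun i _ => by have := hM i j; split_ifs <;> omega

lemma ofColSupport_le_one (g : Fin k → Finset ℕ) (i j : Fin k) : ofColSupport g i j ≤ 1 := by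
  simp only [ofColSupport, Matrix.of_apply]
  split_ifs <;> simp

lemma colSupport_ofColSupport {g : Fin k → Finset ℕ} (hg : ∀ j, g j ⊆ range k) :
    colSupport (ofColSupport g) = g := by
  ext j m
  by_cases hm : m < k
  · obtain ⟨i, rfl⟩ : ∃ i : Fin k, (i : ℕ) = m := ⟨⟨m, hm⟩, rfl⟩
    simp [val_mem_colSupport, ofColSupport]
  · exact iff_of_false (fun h => hm (by simpa using colSupport_subset_range _ j h))
      (fun h => hm (by simpa using hg j h))

lemma ofColSupport_colSupport {M : Matrix (Fin k) (Fin k) ℕ} (hM : ∀ i j, M i j ≤ 1) :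
    ofColSupport (colSupport M) = M := by
  ext i j
  have := hM i j
  simp only [ofColSupport, Matrix.of_apply, val_mem_colSupport]
  split_ifs <;> omega

lemma inMatM_iff {d : ℕ} {M : Matrix (Fin k) (Fin k) ℕ} (hM : ∀ i j, M i j ≤ 1) :
    InMatM d ⟨k, M⟩ ↔ colSupport M ∈ {g ∈ coveringFamilies k | weight g = d} := by
  simp only [InMatM, coveringFamilies, Finset.mem_filter, mem_colFamilies, sdiff_empty,
    colSupport_ne_empty_iff, colSupport_subset_range_succ_iff, forall_and,
    uncoveredRows_colSupport_eq_empty_iff, weight_colSupport hM]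
  tauto

lemma subset_range_of_mem_colFamilies {T : Finset ℕ} {g : Fin k → Finset ℕ}
    (hg : g ∈ colFamilies k T) (j : Fin k) : g j ⊆ range k :=
  (mem_colFamilies.1 hg j).2.trans (sdiff_subset.trans (range_subset_range.2 j.isLt))

end MatrixEncoding

def binaryMatrixEquiv (d k : ℕ) :
    {M : Matrix (Fin k) (Fin k) ℕ // InMatM d ⟨k, M⟩ ∧ EntriesLe 1 ⟨k, M⟩} ≃
      {g // g ∈ {g ∈ coveringFamilies k | weight g = d}} where
  toFun M := ⟨colSupport M.1, (inMatM_iff M.2.2).1 M.2.1⟩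
  invFun g := ⟨ofColSupport g.1, (inMatM_iff (ofColSupport_le_one g.1)).2 (by
      rw [colSupport_ofColSupport (subset_range_of_mem_colFamilies
        (Finset.mem_filter.1 (Finset.mem_filter.1 g.2).1).1)]
      exact g.2), ofColSupport_le_one g.1⟩
  left_inv M := Subtype.ext (ofColSupport_colSupport M.2.2)
  right_inv g := Subtype.ext (colSupport_ofColSupport (subset_range_of_mem_colFamilies
      (Finset.mem_filter.1 (Finset.mem_filter.1 g.2).1).1))

lemma InMatM.fst_le {d : ℕ} {A : Σ k : ℕ, Matrix (Fin k) (Fin k) ℕ} (h : InMatM d A) :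
    A.1 ≤ d := by
  obtain ⟨-, -, hcol, hsum⟩ := h
  calc A.1 = ∑ _j : Fin A.1, 1 := by simp
    _ ≤ ∑ j, ∑ i, A.2 i j := sum_le_sum fun j _ => by
        obtain ⟨i, hi⟩ := hcol j
        exact (Nat.one_le_iff_ne_zero.2 hi).trans
          (single_le_sum (f := fun i => A.2 i j) (fun _ _ => Nat.zero_le _) (mem_univ i))
    _ = d := by rw [Finset.sum_comm]; exact hsum

lemma natCard_subtype_sigma_eq_sum {β : ℕ → Type*} {P : (Σ k, β k) → Prop} {N : ℕ}
    (hP : ∀ A, P A → A.1 < N) [∀ k, Finite {b : β k // P ⟨k, b⟩}] :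
    Nat.card {A // P A} = ∑ k ∈ range N, Nat.card {b : β k // P ⟨k, b⟩} := by
  rw [← Fin.sum_univ_eq_sum_range (fun k => Nat.card {b : β k // P ⟨k, b⟩}), ← Nat.card_sigma]
  exact Nat.card_congr
    { toFun A := ⟨⟨A.1.1, hP _ A.2⟩, ⟨A.1.2, A.2⟩⟩
      invFun p := ⟨⟨p.1, p.2.1⟩, p.2.2⟩
      left_inv _ := rfl
      right_inv _ := rfl }

lemma natCard_binaryMatrix (d : ℕ) :
    Nat.card {A : Σ k : ℕ, Matrix (Fin k) (Fin k) ℕ // InMatM d A ∧ EntriesLe 1 A} =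
      ∑ k ∈ range (d + 1), #{g ∈ coveringFamilies k | weight g = d} := by
  have (k : ℕ) := Finite.of_equiv _ (binaryMatrixEquiv d k).symm
  rw [natCard_subtype_sigma_eq_sum fun A hA => Nat.lt_succ_of_le (InMatM.fst_le hA.1)]
  refine sum_congr rfl fun k _ => ?_
  rw [Nat.card_congr (binaryMatrixEquiv d k), Nat.card_eq_fintype_card, Fintype.card_coe]

end Jovovic

/-- Jovovic's conjecture: the generating function of upper triangular
binary matrices with no zero row or column, by sum of entries, is
`Σ_{n≥0} ∏_{i=1}^n (1 - (1+x)^{-i})` (coefficientwise). -/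
theorem stmt_5 :
    ∀ d N : ℕ, d < N →
      (Nat.card {A : Σ d' : ℕ, Matrix (Fin d') (Fin d') ℕ //
          InMatM d A ∧ EntriesLe 1 A} : ℚ) =
        (PowerSeries.coeff (R := ℚ) d) (∑ n ∈ Finset.range N, ∏ i ∈ Finset.Icc 1 n,
          (1 - ((1 + PowerSeries.X : PowerSeries ℚ)⁻¹) ^ i)) := by
  intro d N hdN
  have hcoeff := PowerSeries.X_pow_dvd_iff.1
    (Jovovic.X_pow_dvd_sum_prod_sub_sum_coveringFamilies (K := ℚ) hdN) d d.lt_succ_self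
  rw [map_sub, sub_eq_zero] at hcoeff
  rw [hcoeff, Jovovic.natCard_binaryMatrix, map_sum, Nat.cast_sum]
  simp only [Jovovic.coeff_sum_coveringFamilies]
end

section
/- For every n ≥ 1, the number of ascent sequences of length n equals Σ_{m=1}^{n} k_m · C(n−1, m−1), where k_m is the number of primitive ascent sequences of length m and C denotes the binomial coefficient. Equivalently, every ascent sequence of length n is obtained from a unique primitive ascent sequence (b_1,…,b_m) and a unique composition (m_1,…,m_m) of n into m positive parts by repeating each b_i exactly m_i times. -/
/-!
Merging every run of equal entries (`List.destutter (· ≠ ·)`) sends a list to a primitive one.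
Doubling an entry changes neither the number of ascents of any prefix nor the bound it imposes
on later entries, so a list is an ascent sequence iff its primitive part is. For a primitive `b`
of length `m ≥ 1`, the lists of length `n` collapsing to `b` satisfy Pascal's recurrence (the
first run of `x :: l` either goes on in `l` or ends there), so there are `C(n - 1, m - 1)` of them.
-/

namespace List

variable {α : Type*}

theorem head?_destutter' (R : α → α → Prop) [DecidableRel R] (a : α) (l : List α) :
    (l.destutter' R a).head? = some a := by
  induction l with
  | nil => rfl
  | cons b l ih =>
    rw [destutter'_cons]
    split_ifs
    · rfl
    · exact ih

theorem head?_destutter (R : α → α → Prop) [DecidableRel R] (l : List α) :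
    (l.destutter R).head? = l.head? := by
  cases l with
  | nil => rfl
  | cons a l => exact head?_destutter' R a l

variable [DecidableEq α]

theorem destutter_ne_cons (x : α) (l : List α) :
    (x :: l).destutter (· ≠ ·) =
      if l.head? = some x then l.destutter (· ≠ ·) else x :: l.destutter (· ≠ ·) := by
  cases l with
  | nil => simp
  | cons y l => by_cases h : x = y <;> simp [destutter_cons', h, eq_comm]

theorem destutter_ne_append_dup (a : List α) (x : α) (b : List α) :
    (a ++ x :: x :: b).destutter (· ≠ ·) = (a ++ x :: b).destutter (· ≠ ·) := by
  induction a with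
  | nil => simp [destutter_ne_cons x (x :: b)]
  | cons c a ih =>
    have : (a ++ x :: x :: b).head? = (a ++ x :: b).head? := by cases a <;> rfl
    simp only [cons_append, destutter_ne_cons c, this, ih]

theorem exists_eq_append_dup_of_not_isChain_ne {l : List α} (h : ¬ l.IsChain (· ≠ ·)) :
    ∃ a x b, l = a ++ x :: x :: b := by
  induction l with
  | nil => exact absurd .nil h
  | cons x l ih =>
    cases l with
    | nil => exact absurd (.singleton x) h
    | cons y l =>
      by_cases hxy : x = y
      · exact ⟨[], x, l, by simp [hxy]⟩
      · obtain ⟨a, z, b, e⟩ := ih fun hc => h (hc.cons_cons hxy)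
        exact ⟨x :: a, z, b, by rw [e, cons_append]⟩

theorem apply_destutter_ne {β : Sort*} (f : List α → β)
    (hf : ∀ a x b, f (a ++ x :: x :: b) = f (a ++ x :: b)) (l : List α) :
    f (l.destutter (· ≠ ·)) = f l := by
  induction h : l.length using Nat.strong_induction_on generalizing l with
  | _ n ih =>
    by_cases hl : l.IsChain (· ≠ ·)
    · rw [destutter_of_isChain _ l hl]
    · obtain ⟨a, x, b, rfl⟩ := exists_eq_append_dup_of_not_isChain_ne hl
      rw [destutter_ne_append_dup, hf, ih _ (by simp [← h]) _ rfl]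

theorem destutter_ne_cons_eq_cons_iff {x y : α} {b l : List α} (hb : (x :: b).IsChain (· ≠ ·)) :
    (y :: l).destutter (· ≠ ·) = x :: b ↔
      y = x ∧ (l.destutter (· ≠ ·) = x :: b ∨ l.destutter (· ≠ ·) = b) := by
  have hhead := head?_destutter (· ≠ ·) l
  rw [destutter_ne_cons]
  split_ifs with h
  · constructor
    · intro e
      rw [e, h] at hhead
      exact ⟨(Option.some.inj hhead).symm, .inl e⟩
    · rintro ⟨rfl, e | e⟩
      · exact e
      · cases b with
        | nil => simp_all
        | cons z b =>
          rw [e, h] at hhead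
          exact ((isChain_cons_cons.mp hb).1 (Option.some.inj hhead).symm).elim
  · constructor
    · intro e
      obtain ⟨rfl, htail⟩ := cons_eq_cons.mp e
      exact ⟨rfl, .inr htail⟩
    · rintro ⟨rfl, e | e⟩
      · rw [e] at hhead
        exact absurd hhead.symm h
      · rw [e]

def stutterings (b : List α) (n : ℕ) : Set (List α) :=
  {l | l.length = n ∧ l.destutter (· ≠ ·) = b}

theorem stutterings_zero (b : List α) : stutterings b 0 = {l | l = [] ∧ b = []} := by
  ext l
  simp only [stutterings, Set.mem_ofPred_eq, length_eq_zero_iff]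
  grind [destutter_nil]

theorem stutterings_nil_succ (n : ℕ) : stutterings ([] : List α) (n + 1) = ∅ :=
  Set.eq_empty_of_forall_notMem fun _ ⟨_, _⟩ => by simp_all

theorem stutterings_cons_succ {x : α} {b : List α} (hb : (x :: b).IsChain (· ≠ ·)) (n : ℕ) :
    stutterings (x :: b) (n + 1) = (x :: ·) '' (stutterings (x :: b) n ∪ stutterings b n) := by
  ext l
  cases l with
  | nil => simp [stutterings]
  | cons y l =>
    simp only [stutterings, destutter_ne_cons_eq_cons_iff hb, length_cons, Set.mem_image,
      Set.mem_union, Set.mem_ofPred_eq, cons.injEq, add_left_inj]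
    constructor
    · rintro ⟨hl, rfl, h⟩
      exact ⟨l, h.imp (⟨hl, ·⟩) (⟨hl, ·⟩), rfl, rfl⟩
    · rintro ⟨l, h, rfl, rfl⟩
      rcases h with ⟨hl, h⟩ | ⟨hl, h⟩
      · exact ⟨hl, rfl, .inl h⟩
      · exact ⟨hl, rfl, .inr h⟩

theorem disjoint_stutterings_cons (x : α) (b : List α) (n : ℕ) :
    _root_.Disjoint (stutterings (x :: b) n) (stutterings b n) :=
  Set.disjoint_left.mpr fun _ h h' => cons_ne_self x b (h.2.symm.trans h'.2)

theorem encard_stutterings_cons_succ {x : α} {b : List α} (hb : (x :: b).IsChain (· ≠ ·))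
    (n : ℕ) : (stutterings (x :: b) (n + 1)).encard = n.choose b.length := by
  induction n generalizing x b with
  | zero =>
    rw [stutterings_cons_succ hb, cons_injective.encard_image,
      Set.encard_union_eq (disjoint_stutterings_cons x b 0)]
    cases b <;> simp [stutterings_zero]
  | succ n ih =>
    rw [stutterings_cons_succ hb, cons_injective.encard_image,
      Set.encard_union_eq (disjoint_stutterings_cons x b _), ih hb]
    cases b with
    | nil => simp [stutterings_nil_succ]
    | cons z b => rw [ih hb.tail, length_cons, Nat.choose_succ_succ, Nat.cast_add, add_comm]

theorem finite_stutterings (b : List α) (n : ℕ) : (stutterings b n).Finite := by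
  by_cases hb : b.IsChain (· ≠ ·)
  · cases b with
    | nil => exact (Set.finite_singleton []).subset fun l hl => (destutter_eq_nil _).mp hl.2
    | cons x b =>
      cases n with
      | zero => simp [stutterings_zero]
      | succ n => exact Set.finite_of_encard_eq_coe (encard_stutterings_cons_succ hb n)
  · exact Set.finite_empty.subset fun l hl => hb (hl.2 ▸ isChain_destutter _ l)

instance (b : List α) (n : ℕ) : Finite (stutterings b n) := (finite_stutterings b n).to_subtype

theorem ncard_stutterings {b : List α} (hb : b.IsChain (· ≠ ·)) (hb₀ : b ≠ []) {n : ℕ}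
    (hn : n ≠ 0) : (stutterings b n).ncard = (n - 1).choose (b.length - 1) := by
  obtain ⟨x, b, rfl⟩ := exists_cons_of_ne_nil hb₀
  obtain ⟨n, rfl⟩ := Nat.exists_eq_succ_of_ne_zero hn
  simp [Set.ncard_def, encard_stutterings_cons_succ hb n]

end List

theorem ascList_cons_cons (x y : ℕ) (l : List ℕ) :
    ascList (x :: y :: l) = (if x < y then 1 else 0) + ascList (y :: l) := by
  unfold ascList
  simp only [List.length_cons, Nat.add_sub_cancel]
  rw [List.range_succ_eq_map, List.countP_cons, List.countP_map, add_comm]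
  simp [Function.comp_def]

theorem ascList_le_length_sub_one (l : List ℕ) : ascList l ≤ l.length - 1 :=
  List.countP_le_length.trans (List.length_range).le

theorem ascList_le_append (l l' : List ℕ) : ascList l ≤ ascList (l ++ l') := by
  induction l with
  | nil => exact Nat.zero_le _
  | cons x l ih =>
    cases l with
    | nil => exact Nat.zero_le _
    | cons y l =>
      rw [List.cons_append, List.cons_append, ascList_cons_cons, ascList_cons_cons]
      exact Nat.add_le_add_left ih _

theorem ascList_append_dup (a : List ℕ) (x : ℕ) (b : List ℕ) :
    ascList (a ++ x :: x :: b) = ascList (a ++ x :: b) := by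
  induction a with
  | nil => simp [ascList_cons_cons]
  | cons c a ih =>
    cases a with
    | nil => simp [ascList_cons_cons]
    | cons d a =>
      simp only [List.cons_append, ascList_cons_cons] at ih ⊢
      rw [ih]

theorem isAscentSeq_singleton (y : ℕ) : IsAscentSeq [y] ↔ y = 0 := by
  simp +contextual [IsAscentSeq]

theorem isAscentSeq_append_singleton {l : List ℕ} (hl : l ≠ []) (y : ℕ) :
    IsAscentSeq (l ++ [y]) ↔ IsAscentSeq l ∧ y ≤ 1 + ascList l := by
  have hpos : 0 < l.length := List.length_pos_iff.mpr hl
  have hgetD : ∀ i < l.length, (l ++ [y]).getD i 0 = l.getD i 0 :=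
    fun i hi => List.getD_append _ _ _ _ hi
  have htake : ∀ i ≤ l.length, (l ++ [y]).take i = l.take i :=
    fun i hi => List.take_append_of_le_length hi
  have hlast : (l ++ [y]).getD l.length 0 = y := by simp
  unfold IsAscentSeq
  rw [hgetD 0 hpos, List.length_append, List.length_singleton]
  constructor
  · rintro ⟨h0, h⟩
    refine ⟨⟨h0, fun i hi hil => ?_⟩, ?_⟩
    · rw [← hgetD i hil, ← htake i hil.le]
      exact h i hi (by omega)
    · simpa [hlast, htake] using h l.length hpos (by omega)
  · rintro ⟨⟨h0, h⟩, hy⟩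
    refine ⟨h0, fun i hi hil => ?_⟩
    rcases (Nat.lt_succ_iff.mp hil).lt_or_eq with hil | rfl
    · rw [hgetD i hil, htake i hil.le]
      exact h i hi hil
    · rwa [hlast, htake _ le_rfl, List.take_length]

theorem IsAscentSeq.lt_length {l : List ℕ} (h : IsAscentSeq l) : ∀ x ∈ l, x < l.length := by
  induction l using List.reverseRecOn with
  | nil => simp
  | append_singleton l y ih =>
    rcases eq_or_ne l [] with rfl | hl
    · simp_all [isAscentSeq_singleton]
    obtain ⟨hl', hy⟩ := (isAscentSeq_append_singleton hl y).mp h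
    have := ascList_le_length_sub_one l
    have := List.length_pos_iff.mpr hl
    intro x hx
    rcases List.mem_append.mp hx with hx | hx
    · simpa using (ih hl' x hx).trans (Nat.lt_succ_self _)
    · simp at hx ⊢
      omega

theorem isAscentSeq_append_dup (a : List ℕ) (x : ℕ) (b : List ℕ) :
    IsAscentSeq (a ++ x :: x :: b) ↔ IsAscentSeq (a ++ x :: b) := by
  induction b using List.reverseRecOn with
  | nil =>
    rw [show a ++ [x, x] = a ++ [x] ++ [x] by simp, isAscentSeq_append_singleton (by simp),
      and_iff_left_iff_imp]
    intro h
    rcases eq_or_ne a [] with rfl | ha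
    · simp [(isAscentSeq_singleton x).mp h]
    · have := ((isAscentSeq_append_singleton ha x).mp h).2
      have := ascList_le_append a [x]
      omega
  | append_singleton b y ih =>
    rw [show a ++ x :: x :: (b ++ [y]) = a ++ x :: x :: b ++ [y] by simp,
      show a ++ x :: (b ++ [y]) = a ++ x :: b ++ [y] by simp,
      isAscentSeq_append_singleton (by simp), isAscentSeq_append_singleton (by simp), ih,
      ascList_append_dup]

theorem isAscentSeq_destutter (l : List ℕ) :
    IsAscentSeq (l.destutter (· ≠ ·)) ↔ IsAscentSeq l :=
  (List.apply_destutter_ne IsAscentSeq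
    (fun a x b => propext (isAscentSeq_append_dup a x b)) l).to_iff

theorem finite_setOf_isAscentSeq (n : ℕ) :
    {l : List ℕ | l.length = n ∧ IsAscentSeq l}.Finite := by
  refine ((List.finite_length_eq (Fin n) n).image (List.map Fin.val)).subset ?_
  rintro l ⟨hl, h⟩
  exact ⟨l.pmap Fin.mk fun x hx => hl ▸ h.lt_length x hx, by simpa using hl,
    by simp [List.map_pmap]⟩

theorem Nat.card_sigma_of_forall_card_eq {ι : Type*} [Finite ι] {β : ι → Type*}
    [∀ i, Finite (β i)] {c : ℕ} (h : ∀ i, Nat.card (β i) = c) :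
    Nat.card (Σ i, β i) = Nat.card ι * c := by
  have := Fintype.ofFinite ι
  simp [Nat.card_sigma, h, Nat.card_eq_fintype_card]

instance (m : ℕ) : Finite {l : List ℕ // l.length = m ∧ IsAscentSeq l ∧ l.Chain' (· ≠ ·)} :=
  ((finite_setOf_isAscentSeq m).subset fun _ h => ⟨h.1, h.2.1⟩).to_subtype

def ascentSeqEquivSigma {n : ℕ} (hn : 1 ≤ n) :
    {l : List ℕ // l.length = n ∧ IsAscentSeq l} ≃
      Σ m : Finset.Icc 1 n,
        Σ b : {l : List ℕ // l.length = m ∧ IsAscentSeq l ∧ l.Chain' (· ≠ ·)},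
          List.stutterings b.1 n where
  toFun l :=
    ⟨⟨(l.1.destutter (· ≠ ·)).length, Finset.mem_Icc.mpr
      ⟨List.length_pos_iff.mpr <| (List.destutter_eq_nil _).not.mpr <|
          List.ne_nil_of_length_pos (by have := l.2.1; omega),
        (List.destutter_sublist _ l.1).length_le.trans_eq l.2.1⟩⟩,
      ⟨l.1.destutter (· ≠ ·), rfl, (isAscentSeq_destutter l.1).mpr l.2.2,
        List.isChain_destutter _ l.1⟩,
      ⟨l.1, l.2.1, rfl⟩⟩
  invFun x := ⟨x.2.2.1, x.2.2.2.1,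
    (isAscentSeq_destutter _).mp (by rw [x.2.2.2.2]; exact x.2.1.2.2.1)⟩
  left_inv _ := rfl
  right_inv := by
    rintro ⟨⟨m, hm⟩, ⟨b, hbm, hb⟩, l, hl, hlb⟩
    change _ = b at hlb
    change _ = m at hbm
    subst hlb hbm
    rfl

/-- the number of ascent sequences of length `n` equals
`Σ_{m=1}^n k_m · C(n-1, m-1)` where `k_m` counts primitive ascent sequences of length `m`. -/
theorem stmt_7 (n : ℕ) (hn : 1 ≤ n) :
    Nat.card {l : List ℕ // l.length = n ∧ IsAscentSeq l} =
      ∑ m ∈ Finset.Icc 1 n,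
        Nat.card {l : List ℕ // l.length = m ∧ IsAscentSeq l ∧ l.Chain' (· ≠ ·)} *
          Nat.choose (n - 1) (m - 1) := by
  rw [Nat.card_congr (ascentSeqEquivSigma hn), Nat.card_sigma]
  refine (Fintype.sum_congr _ _ fun ⟨m, hm⟩ => ?_).trans (Finset.sum_coe_sort _ _)
  refine Nat.card_sigma_of_forall_card_eq fun b => ?_
  have hb₀ : b.1 ≠ [] :=
    List.ne_nil_of_length_pos (by rw [b.2.1]; exact (Finset.mem_Icc.mp hm).1)
  rw [Nat.card_coe_set_eq, List.ncard_stutterings b.2.2.2 hb₀ (by omega), b.2.1]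
end

section
/- Let R = ℚ[u,v,y] and let G ∈ R⟦t⟧ be the formal power series whose coefficient of t^n is Σ_{s} u^{asc(s)} v^{last(s)} y^{adjpairs(s)}, the sum over all ascent sequences s of length n (so the coefficient of t^0 is 1). Let H = G − 1. Let σ₁ : R → R be the ℚ-algebra homomorphism fixing u and y and sending v ↦ 1, and let σ₂ : R → R be the ℚ-algebra homomorphism sending u ↦ uv, v ↦ 1 and fixing y; extend both coefficientwise to R⟦t⟧. Then H · ((v − 1) − t(1 + yv − y − uv)) = t(v − 1) − t·σ₁(H) + t·u·v²·σ₂(H). -/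
/-- The number of ascent sequences of length `n` with `a` ascents, last letter `ℓ`
(the empty sequence having last letter `0`) and `b` equal pairs. -/
noncomputable def ascentCount3 (n a ℓ b : ℕ) : ℕ :=
  Nat.card {l : List ℕ // l.length = n ∧ IsAscentSeq l ∧
    ascList l = a ∧ l.getLastD 0 = ℓ ∧ adjpairs l = b}

/-- `G ∈ R⟦t⟧`, `R = ℚ[u,v,y]`: the coefficient of `t^n` is
`Σ_s u^{asc(s)} v^{last(s)} y^{adjpairs(s)}` over ascent sequences `s` of length `n`. -/
noncomputable def Gser : PowerSeries (MvPolynomial (Fin 3) ℚ) :=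
  PowerSeries.mk fun n =>
    ∑ a ∈ Finset.range (n + 1), ∑ l ∈ Finset.range (n + 1), ∑ b ∈ Finset.range (n + 1),
      (ascentCount3 n a l b : MvPolynomial (Fin 3) ℚ) *
        (MvPolynomial.X 0 ^ a * MvPolynomial.X 1 ^ l * MvPolynomial.X 2 ^ b)

open Finset

def countAdjacent (p : ℕ → ℕ → Bool) (l : List ℕ) : ℕ :=
  (List.range (l.length - 1)).countP fun j => p (l.getD j 0) (l.getD (j + 1) 0)

lemma ascList_eq_countAdjacent (l : List ℕ) :
    ascList l = countAdjacent (fun a b => decide (a < b)) l := rfl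

lemma adjpairs_eq_countAdjacent (l : List ℕ) :
    adjpairs l = countAdjacent (fun a b => decide (a = b)) l := rfl

lemma countAdjacent_le (p : ℕ → ℕ → Bool) (l : List ℕ) : countAdjacent p l ≤ l.length - 1 :=
  List.countP_le_length.trans_eq List.length_range

lemma countAdjacent_append_singleton (p : ℕ → ℕ → Bool) {s : List ℕ} (hs : s ≠ []) (x : ℕ) :
    countAdjacent p (s ++ [x]) = countAdjacent p s + if p (s.getLastD 0) x then 1 else 0 := by
  obtain ⟨n, hn⟩ : ∃ n, s.length = n + 1 :=
    Nat.exists_eq_add_one.mpr (List.length_pos_iff.mpr hs)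
  have hlast : s.getLastD 0 = s.getD n 0 := by
    rw [List.getLastD_eq_getLast?, List.getLast?_eq_getElem?, hn, Nat.add_sub_cancel,
      List.getD_eq_getElem?_getD]
  simp only [countAdjacent, List.length_append, List.length_singleton, hn, Nat.add_sub_cancel,
    List.range_succ, List.countP_append]
  congr 1
  · refine List.countP_congr fun j hj => ?_
    rw [List.mem_range] at hj
    rw [List.getD_append _ _ _ _ (by omega), List.getD_append _ _ _ _ (by omega)]
  · rw [List.countP_singleton, List.getD_append _ _ _ _ (by omega),
      List.getD_append_right _ _ _ _ (by omega), hn, Nat.sub_self, ← hlast]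
    rfl

lemma isAscentSeq_append_singleton_iff {s : List ℕ} (hs : s ≠ []) (x : ℕ) :
    IsAscentSeq (s ++ [x]) ↔ IsAscentSeq s ∧ x ≤ 1 + ascList s := by
  have hl : 0 < s.length := List.length_pos_iff.mpr hs
  have hlast : (s ++ [x]).getD s.length 0 = x := by
    rw [List.getD_append_right _ _ _ _ le_rfl, Nat.sub_self]; rfl
  have htake : ∀ i ≤ s.length, (s ++ [x]).take i = s.take i := fun i hi =>
    List.take_append_of_le_length hi
  simp only [IsAscentSeq, List.getD_append _ _ _ _ hl, List.length_append,
    List.length_singleton]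
  constructor
  · rintro ⟨h0, hasc⟩
    refine ⟨⟨h0, fun i hi0 hi => ?_⟩, ?_⟩
    · simpa only [List.getD_append _ _ _ _ hi, htake i hi.le] using hasc i hi0 (by omega)
    · simpa only [hlast, htake _ le_rfl, List.take_length] using hasc _ hl (by omega)
  · rintro ⟨⟨h0, hasc⟩, hx⟩
    refine ⟨h0, fun i hi0 hi => ?_⟩
    rcases (Nat.lt_succ_iff.mp hi).lt_or_eq with hi | rfl
    · simpa only [List.getD_append _ _ _ _ hi, htake i hi.le] using hasc i hi0 hi
    · simpa only [hlast, htake _ le_rfl, List.take_length] using hx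

lemma IsAscentSeq.getLastD_le {s : List ℕ} (h : IsAscentSeq s) :
    s.getLastD 0 ≤ 1 + ascList s := by
  rcases List.eq_nil_or_concat s with rfl | ⟨L, x, rfl⟩
  · simp
  rw [List.concat_eq_append] at h ⊢
  rcases eq_or_ne L [] with rfl | hL
  · obtain rfl : x = 0 := by simpa using h.1
    simp
  rw [List.getLastD_concat, ascList_eq_countAdjacent, countAdjacent_append_singleton _ hL]
  have := ((isAscentSeq_append_singleton_iff hL x).mp h).2
  rw [ascList_eq_countAdjacent] at this
  omega

def ascentSeqs : ℕ → Finset (List ℕ)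
  | 0 => {[]}
  | 1 => {[0]}
  | n + 2 => (ascentSeqs (n + 1)).biUnion fun s => (range (ascList s + 2)).image (s ++ [·])

lemma mem_ascentSeqs {n : ℕ} {l : List ℕ} : l ∈ ascentSeqs n ↔ l.length = n ∧ IsAscentSeq l := by
  induction n using Nat.twoStepInduction generalizing l with
  | zero =>
    simp only [ascentSeqs, mem_singleton, List.length_eq_zero_iff, iff_self_and]
    rintro rfl
    simp [IsAscentSeq]
  | one =>
    simp only [ascentSeqs, mem_singleton, List.length_eq_one_iff]
    constructor
    · rintro rfl
      exact ⟨⟨0, rfl⟩, rfl, fun i hi0 hi => by simp at hi; omega⟩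
    · rintro ⟨⟨a, rfl⟩, h0, -⟩
      simp_all
  | more n _ ih =>
    simp only [ascentSeqs, mem_biUnion, mem_image, mem_range]
    constructor
    · rintro ⟨s, hs, x, hx, rfl⟩
      obtain ⟨hlen, hasc⟩ := ih.mp hs
      have hs0 : s ≠ [] := List.ne_nil_of_length_eq_add_one hlen
      exact ⟨by simp [hlen], (isAscentSeq_append_singleton_iff hs0 x).mpr ⟨hasc, by omega⟩⟩
    · rintro ⟨hlen, hasc⟩
      rcases List.eq_nil_or_concat l with rfl | ⟨s, x, rfl⟩
      · simp at hlen
      rw [List.concat_eq_append] at hlen hasc ⊢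
      have hslen : s.length = n + 1 := by simpa using hlen
      have hs0 : s ≠ [] := List.ne_nil_of_length_eq_add_one hslen
      obtain ⟨hs, hx⟩ := (isAscentSeq_append_singleton_iff hs0 x).mp hasc
      exact ⟨s, ih.mpr ⟨hslen, hs⟩, x, by omega, rfl⟩

lemma sum_ascentSeqs_add_two {M : Type*} [AddCommMonoid M] (n : ℕ) (f : List ℕ → M) :
    ∑ l ∈ ascentSeqs (n + 2), f l =
      ∑ s ∈ ascentSeqs (n + 1), ∑ x ∈ range (ascList s + 2), f (s ++ [x]) := by
  rw [ascentSeqs, sum_biUnion]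
  · exact sum_congr rfl fun s _ => sum_image fun x _ x' _ h =>
      List.singleton_inj.mp (List.append_cancel_left h)
  · intro s _ s' _ hne
    simp only [Function.onFun, disjoint_left, mem_image]
    rintro _ ⟨x, -, rfl⟩ ⟨x', -, h⟩
    exact hne (List.append_inj_left' h rfl).symm

lemma ascentSeqs_stats_le {n : ℕ} {s : List ℕ} (hs : s ∈ ascentSeqs n) :
    ascList s ≤ n ∧ s.getLastD 0 ≤ n ∧ adjpairs s ≤ n := by
  obtain ⟨rfl, hasc⟩ := mem_ascentSeqs.mp hs
  have hasc_le := countAdjacent_le (fun a b => decide (a < b)) s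
  have hadj_le := countAdjacent_le (fun a b => decide (a = b)) s
  rw [← ascList_eq_countAdjacent] at hasc_le
  rw [← adjpairs_eq_countAdjacent] at hadj_le
  rcases eq_or_ne s [] with rfl | hs0
  · simp [ascList, adjpairs]
  have := hasc.getLastD_le
  have := List.length_pos_iff.mpr hs0
  omega

section Weights

variable {R : Type*} [CommSemiring R]

def ascWeight (u v y : R) (s : List ℕ) : R :=
  u ^ ascList s * v ^ s.getLastD 0 * y ^ adjpairs s

def ascentPoly (u v y : R) (n : ℕ) : R :=
  ∑ s ∈ ascentSeqs n, ascWeight u v y s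

lemma map_ascentPoly {S : Type*} [CommSemiring S] (f : R →+* S) (u v y : R) (n : ℕ) :
    f (ascentPoly u v y n) = ascentPoly (f u) (f v) (f y) n := by
  simp [ascentPoly, ascWeight]

@[simp] lemma ascentPoly_zero (u v y : R) : ascentPoly u v y 0 = 1 := by
  simp [ascentPoly, ascentSeqs, ascWeight, ascList, adjpairs]

@[simp] lemma ascentPoly_one (u v y : R) : ascentPoly u v y 1 = 1 := by
  simp [ascentPoly, ascentSeqs, ascWeight, ascList, adjpairs]

def letterWeight (u v y : R) (ℓ x : ℕ) : R :=
  u ^ (if ℓ < x then 1 else 0) * v ^ x * y ^ (if ℓ = x then 1 else 0)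

lemma ascWeight_append_singleton (u v y : R) {s : List ℕ} (hs : s ≠ []) (x : ℕ) :
    ascWeight u v y (s ++ [x]) = ascWeight u 1 y s * letterWeight u v y (s.getLastD 0) x := by
  simp only [ascWeight, letterWeight, ascList_eq_countAdjacent, adjpairs_eq_countAdjacent,
    countAdjacent_append_singleton _ hs, List.getLastD_concat, decide_eq_true_eq, one_pow]
  split_ifs <;> ring

end Weights

section Recurrence

variable {R : Type*} [CommRing R]

lemma sub_one_mul_sum_range_letterWeight (u v y : R) {ℓ N : ℕ} (h : ℓ < N) :
    (v - 1) * ∑ x ∈ range N, letterWeight u v y ℓ x =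
      (1 + y * v - y - u * v) * v ^ ℓ - 1 + u * v ^ N := by
  induction N, h using Nat.le_induction with
  | base =>
    have hbelow : ∑ x ∈ range ℓ, letterWeight u v y ℓ x = ∑ x ∈ range ℓ, v ^ x :=
      sum_congr rfl fun x hx => by
        rw [mem_range] at hx
        rw [letterWeight, if_neg (by omega), if_neg (by omega)]
        ring
    rw [Nat.succ_eq_add_one, sum_range_succ, hbelow, mul_add, mul_geom_sum, letterWeight,
      if_neg (lt_irrefl ℓ), if_pos rfl]
    ring
  | succ N hN ih =>
    rw [sum_range_succ, mul_add, ih, letterWeight, if_pos (show ℓ < N from hN),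
      if_neg (show ℓ ≠ N by omega)]
    ring

lemma sub_one_mul_sum_ascWeight_append (u v y : R) {s : List ℕ} (hs : IsAscentSeq s)
    (hs0 : s ≠ []) :
    (v - 1) * ∑ x ∈ range (ascList s + 2), ascWeight u v y (s ++ [x]) =
      (1 + y * v - y - u * v) * ascWeight u v y s - ascWeight u 1 y s +
        u * v ^ 2 * ascWeight (u * v) 1 y s := by
  simp only [ascWeight_append_singleton u v y hs0, ← mul_sum, mul_left_comm (v - 1),
    sub_one_mul_sum_range_letterWeight u v y (show s.getLastD 0 < ascList s + 2 by
      have := hs.getLastD_le; omega)]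
  simp only [ascWeight, one_pow]
  ring

lemma sub_one_mul_ascentPoly_add_two (u v y : R) (n : ℕ) :
    (v - 1) * ascentPoly u v y (n + 2) =
      (1 + y * v - y - u * v) * ascentPoly u v y (n + 1) - ascentPoly u 1 y (n + 1) +
        u * v ^ 2 * ascentPoly (u * v) 1 y (n + 1) := by
  simp only [ascentPoly, sum_ascentSeqs_add_two, mul_sum, ← sum_sub_distrib, ← sum_add_distrib]
  refine sum_congr rfl fun s hs => ?_
  obtain ⟨hlen, hasc⟩ := mem_ascentSeqs.mp hs
  rw [← mul_sum]
  exact sub_one_mul_sum_ascWeight_append u v y hasc (List.ne_nil_of_length_eq_add_one hlen)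

end Recurrence

section PowerSeries

open PowerSeries

lemma PowerSeries.mul_C_sub_X_mul_C_eq_of_coeff {R : Type*} [CommRing R] {σ₁ σ₂ : R →+* R}
    {a b c : R} {H : PowerSeries R} (h0 : constantCoeff H = 0) (h1 : coeff 1 H * a = a)
    (hrec : ∀ n, coeff (n + 2) H * a =
      b * coeff (n + 1) H - σ₁ (coeff (n + 1) H) + c * σ₂ (coeff (n + 1) H)) :
    H * (C a - X * C b) = X * C a - X * map σ₁ H + X * C c * map σ₂ H := by
  rw [mul_sub, mul_left_comm H X, mul_assoc X (C c)]
  ext (_ | _ | n)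
  · simp [h0]
  · simp [coeff_succ_X_mul, coeff_mul_C, h0, h1]
  · simp only [map_sub, map_add, coeff_succ_X_mul, coeff_mul_C, coeff_C_mul, coeff_map,
      coeff_X, hrec, if_neg (show n + 1 + 1 ≠ 1 by omega)]
    ring

end PowerSeries

open MvPolynomial

lemma ascentCount3_eq_card (n a ℓ b : ℕ) :
    ascentCount3 n a ℓ b =
      #{s ∈ ascentSeqs n | (ascList s, s.getLastD 0, adjpairs s) = (a, ℓ, b)} := by
  rw [ascentCount3, ← Nat.card_eq_finsetCard]
  exact Nat.card_congr <| Equiv.subtypeEquivRight fun s => by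
    simp only [mem_filter, mem_ascentSeqs, Prod.mk.injEq, and_assoc]

lemma coeff_Gser (n : ℕ) :
    PowerSeries.coeff n Gser = ascentPoly (X 0) (X 1) (X 2) n := by
  have hstats : ∀ s ∈ ascentSeqs n, (ascList s, s.getLastD 0, adjpairs s) ∈
      range (n + 1) ×ˢ range (n + 1) ×ˢ range (n + 1) := fun s hs => by
    simp only [mem_product, mem_range, Nat.lt_succ_iff]
    exact ascentSeqs_stats_le hs
  rw [Gser, PowerSeries.coeff_mk, ascentPoly, ← sum_fiberwise_of_maps_to hstats, sum_product,
    sum_congr rfl fun a _ => sum_product _ _ _]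
  refine sum_congr rfl fun a _ => sum_congr rfl fun ℓ _ => sum_congr rfl fun b _ => ?_
  rw [ascentCount3_eq_card, ← nsmul_eq_mul, ← sum_const]
  refine sum_congr rfl fun s hs => ?_
  simp only [mem_filter, Prod.mk.injEq] at hs
  obtain ⟨-, rfl, rfl, rfl⟩ := hs
  rfl

/-- the recurrence
`H·((v−1) − t(1 + yv − y − uv)) = t(v−1) − t·σ₁(H) + t·u·v²·σ₂(H)` where `H = G − 1`,
`σ₁ : v ↦ 1` and `σ₂ : u ↦ uv, v ↦ 1` (extended coefficientwise to `R⟦t⟧`). -/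
theorem stmt_8 :
    (Gser - 1) *
        (@PowerSeries.C (MvPolynomial (Fin 3) ℚ) _ (MvPolynomial.X 1 - 1) -
          PowerSeries.X * @PowerSeries.C (MvPolynomial (Fin 3) ℚ) _
            (1 + MvPolynomial.X 2 * MvPolynomial.X 1 - MvPolynomial.X 2 -
              MvPolynomial.X 0 * MvPolynomial.X 1)) =
      PowerSeries.X * @PowerSeries.C (MvPolynomial (Fin 3) ℚ) _ (MvPolynomial.X 1 - 1) -
        PowerSeries.X * (PowerSeries.map
          (MvPolynomial.aeval ![MvPolynomial.X 0, 1, MvPolynomial.X 2] :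
            MvPolynomial (Fin 3) ℚ →ₐ[ℚ] MvPolynomial (Fin 3) ℚ).toRingHom (Gser - 1)) +
        PowerSeries.X * @PowerSeries.C (MvPolynomial (Fin 3) ℚ) _
            (MvPolynomial.X 0 * MvPolynomial.X 1 ^ 2) *
          (PowerSeries.map
            (MvPolynomial.aeval ![MvPolynomial.X 0 * MvPolynomial.X 1, 1, MvPolynomial.X 2] :
              MvPolynomial (Fin 3) ℚ →ₐ[ℚ] MvPolynomial (Fin 3) ℚ).toRingHom (Gser - 1)) := by
  have hH : ∀ n, PowerSeries.coeff (n + 1) (Gser - 1) = ascentPoly (X 0) (X 1) (X 2) (n + 1) :=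
    fun n => by simp [coeff_Gser, PowerSeries.coeff_one]
  refine PowerSeries.mul_C_sub_X_mul_C_eq_of_coeff ?_ ?_ fun n => ?_
  · rw [map_sub, ← PowerSeries.coeff_zero_eq_constantCoeff_apply, coeff_Gser, ascentPoly_zero,
      map_one, sub_self]
  · simp [hH]
  · simp only [hH, AlgHom.toRingHom_eq_coe, RingHom.coe_coe, map_ascentPoly, aeval_X,
      Matrix.cons_val_zero, Matrix.cons_val_one, Matrix.cons_val]
    linear_combination sub_one_mul_ascentPoly_add_two (X 0 : MvPolynomial (Fin 3) ℚ) (X 1) (X 2) n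
end
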